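/- arXiv:1603.04573 — 5 statements merged into one kernel-verified Lean document; each statement's English description precedes it below -/
import Mathlib

section
/- Every nonempty bounded subset B of a CAT(0) space X admits a unique circumcenter: there exists a unique point c ∈ X minimizing the function x ↦ sup_{b∈B} d(x,b). -/
open Set

/-- A geodesic segment from `x` to `y`, parametrized by arclength on `[0, dist x y]`. -/
def IsGeodesicSegment {X : Type*} [MetricSpace X] (f : ℝ → X) (x y : X) : Prop :=
  f 0 = x ∧ f (dist x y) = y ∧
    ∀ s ∈ Set.Icc (0:ℝ) (dist x y), ∀ t ∈ Set.Icc (0:ℝ) (dist x y),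
      dist (f s) (f t) = |s - t|

/-- A metric space is geodesic if any two points are joined by a geodesic segment. -/
def GeodesicSpace (X : Type*) [MetricSpace X] : Prop :=
  ∀ x y : X, ∃ f : ℝ → X, IsGeodesicSegment f x y

/-- A complete geodesic metric space is CAT(0) if for all `x y z` and any midpoint `m`
of `y` and `z`, the CAT(0) comparison inequality holds. -/
def IsCAT0 (X : Type*) [MetricSpace X] : Prop :=
  CompleteSpace X ∧ GeodesicSpace X ∧
    ∀ x y z m : X, dist y m = dist y z / 2 → dist z m = dist y z / 2 →
      dist x m ^ 2 ≤ (dist x y ^ 2 + dist x z ^ 2) / 2 - dist y z ^ 2 / 4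

/-- A subset is (geodesically) convex if it contains every geodesic segment
between any two of its points. -/
def GeodConvex {X : Type*} [MetricSpace X] (C : Set X) : Prop :=
  ∀ x ∈ C, ∀ y ∈ C, ∀ f : ℝ → X, IsGeodesicSegment f x y →
    ∀ t ∈ Set.Icc (0:ℝ) (dist x y), f t ∈ C

/-- Midpoints exist in a geodesic space. -/
lemma exists_midpoint' {X : Type*} [MetricSpace X] (hg : GeodesicSpace X) (x y : X) :
    ∃ m : X, dist x m = dist x y / 2 ∧ dist y m = dist x y / 2 := by
  obtain ⟨f, h0, h1, hd⟩ := hg x y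
  have hdnn : (0:ℝ) ≤ dist x y := dist_nonneg
  have hmem : dist x y / 2 ∈ Set.Icc (0:ℝ) (dist x y) := ⟨by positivity, by linarith⟩
  have h0mem : (0:ℝ) ∈ Set.Icc (0:ℝ) (dist x y) := ⟨le_refl _, hdnn⟩
  have h1mem : dist x y ∈ Set.Icc (0:ℝ) (dist x y) := ⟨hdnn, le_refl _⟩
  refine ⟨f (dist x y / 2), ?_, ?_⟩
  · have hh := hd 0 h0mem _ hmem
    rw [h0] at hh
    rw [hh, abs_of_nonpos (by linarith)]; ring
  · have hh := hd _ h1mem _ hmem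
    rw [h1] at hh
    rw [hh, abs_of_nonneg (by linarith)]; ring

/-- Every nonempty bounded subset of a CAT(0) space has a unique circumcenter. -/
theorem cat0_circumcenter {X : Type*} [MetricSpace X] (h : IsCAT0 X) (B : Set X)
    (hne : B.Nonempty) (hb : Bornology.IsBounded B) :
    ∃! c : X, ∀ x : X, (⨆ b : B, dist c (b : X)) ≤ ⨆ b : B, dist x (b : X) := by
  obtain ⟨hcomp, hgeo, hcat⟩ := h
  haveI := hcomp
  obtain ⟨b0, hb0⟩ := hne
  haveI : Nonempty B := ⟨⟨b0, hb0⟩⟩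
  haveI : Nonempty X := ⟨b0⟩
  obtain ⟨C, hC⟩ := hb.subset_closedBall b0
  set r : X → ℝ := fun x => ⨆ b : B, dist x (b : X) with hrdef
  have hbdd : ∀ x : X, BddAbove (Set.range fun b : B => dist x (b : X)) := by
    intro x
    refine ⟨dist x b0 + C, ?_⟩
    rintro _ ⟨b, rfl⟩
    have hbC : dist (b : X) b0 ≤ C := by
      have := hC b.2
      simpa [Metric.mem_closedBall] using this
    calc dist x (b : X) ≤ dist x b0 + dist b0 (b : X) := dist_triangle _ _ _
      _ ≤ dist x b0 + C := by rw [dist_comm b0]; linarith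
  have hle : ∀ (x : X) (b : B), dist x (b : X) ≤ r x := fun x b => le_ciSup (hbdd x) b
  have hnonneg : ∀ x, 0 ≤ r x := fun x => le_trans dist_nonneg (hle x ⟨b0, hb0⟩)
  have hlip : ∀ x y : X, r x ≤ r y + dist x y := by
    intro x y
    refine ciSup_le fun b => ?_
    calc dist x (b : X) ≤ dist x y + dist y (b : X) := dist_triangle _ _ _
      _ ≤ dist x y + r y := by linarith [hle y b]
      _ = r y + dist x y := by ring
  -- midpoint estimate
  have hmid : ∀ x y : X, ∃ m : X,
      r m ^ 2 ≤ (r x ^ 2 + r y ^ 2) / 2 - dist x y ^ 2 / 4 := by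
    intro x y
    obtain ⟨m, hm1, hm2⟩ := exists_midpoint' hgeo x y
    refine ⟨m, ?_⟩
    have key : ∀ b : B, dist m (b : X) ^ 2 ≤ (r x ^ 2 + r y ^ 2) / 2 - dist x y ^ 2 / 4 := by
      intro b
      have hc := hcat (b : X) x y m hm1 hm2
      have hx : dist (b : X) x ^ 2 ≤ r x ^ 2 := by
        rw [dist_comm]
        exact pow_le_pow_left₀ dist_nonneg (hle x b) 2
      have hy : dist (b : X) y ^ 2 ≤ r y ^ 2 := by
        rw [dist_comm]
        exact pow_le_pow_left₀ dist_nonneg (hle y b) 2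
      rw [dist_comm m (b : X)]
      linarith
    set RHS := (r x ^ 2 + r y ^ 2) / 2 - dist x y ^ 2 / 4 with hRHS
    have hRHSnn : 0 ≤ RHS := le_trans (sq_nonneg _) (key ⟨b0, hb0⟩)
    have hsq : r m ≤ Real.sqrt RHS := by
      refine ciSup_le fun b => ?_
      rw [show dist m (b:X) = |dist m (b:X)| from (abs_of_nonneg dist_nonneg).symm,
        ← Real.sqrt_sq_eq_abs]
      exact Real.sqrt_le_sqrt (key b)
    calc r m ^ 2 ≤ Real.sqrt RHS ^ 2 := pow_le_pow_left₀ (hnonneg m) hsq 2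
      _ = RHS := Real.sq_sqrt hRHSnn
  set Rinf : ℝ := ⨅ x : X, r x with hRinfdef
  have hbddb : BddBelow (Set.range r) := ⟨0, by rintro _ ⟨x, rfl⟩; exact hnonneg x⟩
  have hRle : ∀ x, Rinf ≤ r x := fun x => ciInf_le hbddb x
  have hRnn : 0 ≤ Rinf := le_ciInf hnonneg
  have hkey : ∀ x y : X, dist x y ^ 2 ≤ 2 * r x ^ 2 + 2 * r y ^ 2 - 4 * Rinf ^ 2 := by
    intro x y
    obtain ⟨m, hm⟩ := hmid x y
    have h1 : Rinf ^ 2 ≤ r m ^ 2 := pow_le_pow_left₀ hRnn (hRle m) 2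
    linarith
  -- minimizing sequence
  have hseq : ∀ n : ℕ, ∃ x : X, r x ^ 2 < Rinf ^ 2 + 1 / (n + 1) := by
    intro n
    have hpos : (0:ℝ) < 1 / (n + 1) := by positivity
    have hlt : Rinf < Real.sqrt (Rinf ^ 2 + 1 / (n + 1)) := by
      nth_rewrite 1 [show Rinf = Real.sqrt (Rinf ^ 2) from (Real.sqrt_sq hRnn).symm]
      exact Real.sqrt_lt_sqrt (sq_nonneg _) (by linarith)
    obtain ⟨x, hx⟩ := exists_lt_of_ciInf_lt hlt
    refine ⟨x, ?_⟩
    have := pow_lt_pow_left₀ hx (hnonneg x) two_ne_zero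
    rwa [Real.sq_sqrt (by positivity)] at this
  choose u hu using hseq
  have hdist : ∀ m n : ℕ, dist (u m) (u n) ^ 2 ≤ 2 * (1 / (m + 1)) + 2 * (1 / (n + 1)) := by
    intro m n
    have := hkey (u m) (u n)
    have h1 := hu m
    have h2 := hu n
    linarith
  have hcauchy : CauchySeq u := by
    rw [Metric.cauchySeq_iff']
    intro ε hε
    obtain ⟨N, hN⟩ := exists_nat_gt (4 / ε ^ 2)
    refine ⟨N, fun n hn => ?_⟩
    have h1 := hdist n N
    have hnN : ((N:ℝ) + 1) ≤ (n:ℝ) + 1 := by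
      have : (N:ℝ) ≤ (n:ℝ) := by exact_mod_cast hn
      linarith
    have h2 : 1 / ((n:ℝ) + 1) ≤ 1 / ((N:ℝ) + 1) :=
      one_div_le_one_div_of_le (by positivity) hnN
    have hNpos : (0:ℝ) < (N:ℝ) + 1 := by positivity
    have h3 : 4 * (1 / ((N:ℝ) + 1)) < ε ^ 2 := by
      rw [mul_one_div, div_lt_iff₀ hNpos]
      have h4 : 4 / ε ^ 2 < (N:ℝ) + 1 := by linarith
      rw [div_lt_iff₀ (by positivity)] at h4
      linarith
    have h5 : dist (u n) (u N) ^ 2 < ε ^ 2 := by linarith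
    exact lt_of_pow_lt_pow_left₀ 2 hε.le h5
  obtain ⟨c, hc⟩ := cauchySeq_tendsto_of_complete hcauchy
  have hrc : r c ≤ Rinf := by
    refine le_of_forall_pos_le_add fun ε hε => ?_
    obtain ⟨N1, hN1⟩ := Metric.tendsto_atTop.mp hc (ε / 2) (by positivity)
    obtain ⟨N2, hN2⟩ := exists_nat_gt (4 / ε ^ 2)
    set n := max N1 N2 with hn
    have hd1 : dist (u n) c < ε / 2 := hN1 n (le_max_left _ _)
    have hsmall : 1 / ((n:ℝ) + 1) < ε ^ 2 / 4 := by
      have hle2 : (N2:ℝ) ≤ n := by exact_mod_cast le_max_right N1 N2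
      have hpos : (0:ℝ) < (n:ℝ) + 1 := by positivity
      rw [div_lt_div_iff₀ hpos (by norm_num)]
      rw [div_lt_iff₀ (by positivity)] at hN2
      nlinarith
    have hun : r (u n) < Rinf + ε / 2 := by
      have h1 := hu n
      have h2 : r (u n) ^ 2 < (Rinf + ε / 2) ^ 2 := by nlinarith
      exact lt_of_pow_lt_pow_left₀ 2 (by positivity) h2
    calc r c ≤ r (u n) + dist c (u n) := hlip c (u n)
      _ = r (u n) + dist (u n) c := by rw [dist_comm]
      _ ≤ Rinf + ε := by linarith
  refine ⟨c, fun x => hrc.trans (hRle x), ?_⟩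
  intro c' hc'
  have he1 : r c' ≤ r c := hc' c
  have he2 : r c ≤ r c' := hrc.trans (hRle c')
  have heq : r c' = r c := le_antisymm he1 he2
  obtain ⟨m, hm⟩ := hmid c' c
  have h2 : r c' ≤ r m := hc' m
  have h3 : r c' ^ 2 ≤ r m ^ 2 := pow_le_pow_left₀ (hnonneg c') h2 2
  have hd0 : dist c' c ^ 2 ≤ 0 := by nlinarith
  have : dist c' c = 0 := by nlinarith [sq_nonneg (dist c' c), dist_nonneg (x := c') (y := c)]
  exact dist_eq_zero.mp this
end

section
/- Cartan fixed point theorem: if a group G acts by isometries on a CAT(0) space X and some G-orbit is bounded, then G has a fixed point in X. -/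
open Set

/-- Cartan fixed point theorem: a group acting by isometries on a CAT(0) space with a
bounded orbit has a fixed point. -/
theorem cartan_fixed_point {X : Type*} [MetricSpace X] (h : IsCAT0 X)
    (G : Type*) [Group G] [MulAction G X]
    (hiso : ∀ g : G, Isometry (fun x : X => g • x))
    (x : X) (hb : Bornology.IsBounded (MulAction.orbit G x)) :
    ∃ c : X, ∀ g : G, g • c = c := by
  classical
  haveI : Nonempty X := ⟨x⟩
  obtain ⟨hcomp, hgeo, hcat⟩ := h
  haveI := hcomp
  set S := MulAction.orbit G x with hS
  have hxS : x ∈ S := MulAction.mem_orbit_self x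
  obtain ⟨C, hC⟩ := Metric.isBounded_iff.mp hb
  set r : X → ℝ := fun y => sSup ((fun s => dist y s) '' S) with hrdef
  have hne : ∀ y : X, ((fun s => dist y s) '' S).Nonempty :=
    fun y => ⟨_, ⟨x, hxS, rfl⟩⟩
  have hbdd : ∀ y : X, BddAbove ((fun s => dist y s) '' S) := by
    intro y
    refine ⟨dist y x + C, ?_⟩
    rintro _ ⟨s, hs, rfl⟩
    calc dist y s ≤ dist y x + dist x s := dist_triangle _ _ _
      _ ≤ dist y x + C := by
          have := hC hxS hs
          linarith
  have hrle : ∀ y, ∀ s ∈ S, dist y s ≤ r y :=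
    fun y s hs => le_csSup (hbdd y) ⟨s, hs, rfl⟩
  have hrsup : ∀ y (B : ℝ), (∀ s ∈ S, dist y s ≤ B) → r y ≤ B := by
    intro y B hB
    apply csSup_le (hne y)
    rintro _ ⟨s, hs, rfl⟩
    exact hB s hs
  have hr0 : ∀ y, 0 ≤ r y := fun y => le_trans dist_nonneg (hrle y x hxS)
  -- infimum of squared radius
  set Q : ℝ := sInf (Set.range fun y => r y ^ 2) with hQdef
  have hbb : BddBelow (Set.range fun y => r y ^ 2) := by
    refine ⟨0, ?_⟩
    rintro _ ⟨z, rfl⟩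
    positivity
  have hQle : ∀ y : X, Q ≤ r y ^ 2 :=
    fun y => csInf_le hbb (Set.mem_range_self y)
  have hQ0 : 0 ≤ Q := by
    apply le_csInf (Set.range_nonempty _)
    rintro _ ⟨z, rfl⟩
    positivity
  -- midpoints exist
  have hmid : ∀ y z : X, ∃ m : X, dist y m = dist y z / 2 ∧ dist z m = dist y z / 2 := by
    intro y z
    obtain ⟨f, hf0, hfd, hfiso⟩ := hgeo y z
    have hd : (0:ℝ) ≤ dist y z := dist_nonneg
    refine ⟨f (dist y z / 2), ?_, ?_⟩
    · have h1 := hfiso 0 ⟨le_refl 0, hd⟩ (dist y z / 2) ⟨by linarith, by linarith⟩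
      rw [hf0] at h1
      rw [h1, abs_of_nonpos (by linarith)]
      ring
    · have h1 := hfiso (dist y z) ⟨hd, le_refl _⟩ (dist y z / 2) ⟨by linarith, by linarith⟩
      rw [hfd] at h1
      rw [h1, abs_of_nonneg (by linarith)]
      ring
  -- key inequality
  have hkey : ∀ y z : X, dist y z ^ 2 ≤ 2 * r y ^ 2 + 2 * r z ^ 2 - 4 * Q := by
    intro y z
    obtain ⟨m, hmy, hmz⟩ := hmid y z
    have hB : ∀ s ∈ S, dist m s ^ 2 ≤ (r y ^ 2 + r z ^ 2) / 2 - dist y z ^ 2 / 4 := by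
      intro s hs
      have h1 := hcat s y z m hmy hmz
      have h2 : dist s y ^ 2 ≤ r y ^ 2 := by
        rw [dist_comm]
        exact pow_le_pow_left₀ dist_nonneg (hrle y s hs) 2
      have h3 : dist s z ^ 2 ≤ r z ^ 2 := by
        rw [dist_comm]
        exact pow_le_pow_left₀ dist_nonneg (hrle z s hs) 2
      rw [dist_comm]
      linarith
    set B : ℝ := (r y ^ 2 + r z ^ 2) / 2 - dist y z ^ 2 / 4 with hBdef
    have hB0 : 0 ≤ B := le_trans (sq_nonneg _) (hB x hxS)
    have hrm : r m ≤ Real.sqrt B := by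
      apply hrsup
      intro s hs
      have := hB s hs
      nlinarith [Real.sq_sqrt hB0, Real.sqrt_nonneg B, dist_nonneg (x := m) (y := s)]
    have hrm2 : r m ^ 2 ≤ B := by
      nlinarith [Real.sq_sqrt hB0, hr0 m, Real.sqrt_nonneg B]
    have := hQle m
    simp only [hBdef] at hrm2
    linarith
  -- minimizing sequence
  have hseq : ∀ n : ℕ, ∃ y : X, r y ^ 2 < Q + (1/2) ^ n := by
    intro n
    have hlt : Q < Q + (1/2:ℝ) ^ n := by
      have : (0:ℝ) < (1/2:ℝ) ^ n := by positivity
      linarith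
    obtain ⟨_, ⟨y, rfl⟩, hy⟩ := exists_lt_of_csInf_lt (Set.range_nonempty _) hlt
    exact ⟨y, hy⟩
  choose u hu using hseq
  have hcau : CauchySeq u := by
    rw [Metric.cauchySeq_iff]
    intro ε hε
    obtain ⟨N, hN⟩ : ∃ N : ℕ, (4:ℝ) * (1/2) ^ N < ε ^ 2 := by
      obtain ⟨N, hN⟩ := exists_pow_lt_of_lt_one (show (0:ℝ) < ε ^ 2 / 4 by positivity)
        (by norm_num : (1:ℝ)/2 < 1)
      exact ⟨N, by linarith⟩
    refine ⟨N, fun m hm n hn => ?_⟩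
    have h1 := hkey (u m) (u n)
    have h2 := hu m
    have h3 := hu n
    have hpm : (1/2:ℝ) ^ m ≤ (1/2) ^ N :=
      pow_le_pow_of_le_one (by norm_num) (by norm_num) hm
    have hpn : (1/2:ℝ) ^ n ≤ (1/2) ^ N :=
      pow_le_pow_of_le_one (by norm_num) (by norm_num) hn
    have hsq : dist (u m) (u n) ^ 2 < ε ^ 2 := by linarith
    nlinarith [dist_nonneg (x := u m) (y := u n)]
  obtain ⟨c, hc⟩ := cauchySeq_tendsto_of_complete hcau
  -- r is 1-Lipschitz
  have hlip : LipschitzWith 1 r := by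
    apply LipschitzWith.of_dist_le_mul
    intro y z
    rw [Real.dist_eq, NNReal.coe_one, one_mul, abs_sub_le_iff]
    constructor
    · have : r y ≤ r z + dist y z := by
        apply hrsup
        intro s hs
        calc dist y s ≤ dist y z + dist z s := dist_triangle _ _ _
          _ ≤ dist y z + r z := by linarith [hrle z s hs]
          _ = r z + dist y z := by ring
      linarith
    · have : r z ≤ r y + dist y z := by
        apply hrsup
        intro s hs
        calc dist z s ≤ dist z y + dist y s := dist_triangle _ _ _
          _ ≤ dist z y + r y := by linarith [hrle y s hs]
          _ = r y + dist y z := by rw [dist_comm z y]; ring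
      linarith
  have hrc : r c ^ 2 = Q := by
    have t1 : Filter.Tendsto (fun n => r (u n) ^ 2) Filter.atTop (nhds (r c ^ 2)) := by
      exact (((hlip.continuous.tendsto c).comp hc).pow 2)
    have t2 : Filter.Tendsto (fun n => r (u n) ^ 2) Filter.atTop (nhds Q) := by
      have hup : Filter.Tendsto (fun n : ℕ => Q + (1/2:ℝ) ^ n) Filter.atTop (nhds (Q + 0)) := by
        apply Filter.Tendsto.const_add
        exact tendsto_pow_atTop_nhds_zero_of_lt_one (by norm_num) (by norm_num)
      rw [add_zero] at hup
      apply tendsto_of_tendsto_of_tendsto_of_le_of_le tendsto_const_nhds hup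
      · exact fun n => hQle (u n)
      · exact fun n => (hu n).le
    exact tendsto_nhds_unique t1 t2
  -- the orbit is invariant and r is equivariant
  have hsmem : ∀ (g : G), ∀ s ∈ S, g • s ∈ S := by
    intro g s hs
    obtain ⟨k, rfl⟩ := hs
    exact ⟨g * k, (mul_smul g k x)⟩
  have hdist : ∀ (g : G) (a b : X), dist (g • a) (g • b) = dist a b :=
    fun g a b => (hiso g).dist_eq a b
  have horb : ∀ (g : G) (y : X), r (g • y) = r y := by
    intro g y
    have himg : (fun s => dist (g • y) s) '' S = (fun s => dist y s) '' S := by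
      ext d
      constructor
      · rintro ⟨s, hs, rfl⟩
        refine ⟨g⁻¹ • s, hsmem g⁻¹ s hs, ?_⟩
        simp only
        rw [← hdist g y (g⁻¹ • s), smul_inv_smul]
      · rintro ⟨s, hs, rfl⟩
        refine ⟨g • s, hsmem g s hs, ?_⟩
        simp only
        rw [hdist g y s]
    simp only [hrdef]
    rw [himg]
  refine ⟨c, fun g => ?_⟩
  have h1 := hkey c (g • c)
  rw [horb g c, hrc] at h1
  have h2 : dist c (g • c) ^ 2 ≤ 0 := by linarith
  have h3 : dist c (g • c) = 0 := by
    nlinarith [dist_nonneg (x := c) (y := g • c)]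
  exact (eq_of_dist_eq_zero h3).symm
end

section
/- Let X be a CAT(0) space in which the closed convex hull of every finite set of points is compact. Then the closed convex hull of every compact subset of X is compact. -/
open Set

/-- The closed convex hull of a subset of a metric space. -/
def geodClosedConvexHull {X : Type*} [MetricSpace X] (Y : Set X) : Set X :=
  ⋂₀ {C : Set X | IsClosed C ∧ GeodConvex C ∧ Y ⊆ C}

-- midpoint existence, landing in convex sets
lemma geodesic_midpoint {X : Type*} [MetricSpace X] (hg : GeodesicSpace X) (u v : X) :
    ∃ m : X, dist u m = dist u v / 2 ∧ dist v m = dist u v / 2 ∧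
      ∀ C : Set X, GeodConvex C → u ∈ C → v ∈ C → m ∈ C := by
  obtain ⟨f, hf0, hfd, hfd2⟩ := hg u v
  have hd : (0:ℝ) ≤ dist u v := dist_nonneg
  have h0 : (0:ℝ) ∈ Set.Icc (0:ℝ) (dist u v) := ⟨le_refl _, hd⟩
  have hD : dist u v ∈ Set.Icc (0:ℝ) (dist u v) := ⟨hd, le_refl _⟩
  have hm : dist u v / 2 ∈ Set.Icc (0:ℝ) (dist u v) := ⟨by linarith, by linarith⟩
  refine ⟨f (dist u v / 2), ?_, ?_, ?_⟩
  · have := hfd2 0 h0 (dist u v / 2) hm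
    rw [hf0] at this
    rw [this]
    rw [abs_of_nonpos (by linarith)]; ring
  · have := hfd2 (dist u v) hD (dist u v / 2) hm
    rw [hfd] at this
    rw [this, abs_of_nonneg (by linarith)]; ring
  · intro C hC hu hv
    exact hC u hu v hv f ⟨hf0, hfd, hfd2⟩ (dist u v / 2) hm

-- the key comparison: midpoints of two sides from a common vertex
lemma half_lemma {X : Type*} [MetricSpace X] (h : IsCAT0 X) (v a b m1 m2 : X)
    (h1 : dist v m1 = dist v a / 2) (h2 : dist a m1 = dist v a / 2)
    (h3 : dist v m2 = dist v b / 2) (h4 : dist b m2 = dist v b / 2) :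
    dist m1 m2 ≤ dist a b / 2 := by
  have H1 := h.2.2 m1 v b m2 h3 h4
  have H2 := h.2.2 b v a m1 h1 h2
  have e1 : dist m1 v = dist v a / 2 := by rw [dist_comm]; exact h1
  have e2 : dist m1 b = dist b m1 := dist_comm _ _
  have e3 : dist b v = dist v b := dist_comm _ _
  have e4 : dist b a = dist a b := dist_comm _ _
  rw [e1, e2] at H1
  rw [e3, e4] at H2
  nlinarith [dist_nonneg (x := m1) (y := m2), dist_nonneg (x := a) (y := b)]

-- convexity of infDist to a convex nonempty set, at midpoints
lemma infDist_midpoint {X : Type*} [MetricSpace X] (h : IsCAT0 X) (T : Set X)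
    (hT : GeodConvex T) (hTne : T.Nonempty) (y z m : X)
    (hym : dist y m = dist y z / 2) (hzm : dist z m = dist y z / 2) :
    Metric.infDist m T ≤ (Metric.infDist y T + Metric.infDist z T) / 2 := by
  refine le_of_forall_pos_le_add fun δ hδ => ?_
  obtain ⟨p, hp, hyp⟩ := (Metric.infDist_lt_iff hTne).mp
    (show Metric.infDist y T < Metric.infDist y T + δ by linarith)
  obtain ⟨q, hq, hzq⟩ := (Metric.infDist_lt_iff hTne).mp
    (show Metric.infDist z T < Metric.infDist z T + δ by linarith)
  obtain ⟨n, hn1, hn2, -⟩ := geodesic_midpoint h.2.1 z p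
  obtain ⟨m', hm'1, hm'2, hm'C⟩ := geodesic_midpoint h.2.1 p q
  have hmem : m' ∈ T := hm'C T hT hp hq
  have d1 : dist m n ≤ dist y p / 2 := by
    refine half_lemma h z y p m n ?_ ?_ hn1 hn2
    · rw [dist_comm z y]; exact hzm
    · rw [dist_comm z y]; exact hym
  have d2 : dist n m' ≤ dist z q / 2 := by
    refine half_lemma h p z q n m' ?_ ?_ hm'1 hm'2
    · rw [dist_comm p z]; exact hn2
    · rw [dist_comm p z]; exact hn1
  have : Metric.infDist m T ≤ dist m m' := Metric.infDist_le_dist_of_mem hmem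
  have htri : dist m m' ≤ dist m n + dist n m' := dist_triangle _ _ _
  linarith

-- sublevel sets of infDist to a convex nonempty set are geodesically convex
lemma sublevel_geodConvex {X : Type*} [MetricSpace X] (h : IsCAT0 X) (T : Set X)
    (hT : GeodConvex T) (hTne : T.Nonempty) (ε : ℝ) :
    GeodConvex {x : X | Metric.infDist x T ≤ ε} := by
  intro y hy z hz f hf t ht
  obtain ⟨hf0, hfd, hfiso⟩ := hf
  set D := dist y z with hD
  have hD0 : (0:ℝ) ≤ D := dist_nonneg
  set A : Set ℝ := Set.Icc 0 D ∩ (fun s => Metric.infDist (f s) T) ⁻¹' Set.Iic ε with hA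
  have hfc : ContinuousOn f (Set.Icc 0 D) := by
    have : LipschitzOnWith 1 f (Set.Icc 0 D) := by
      apply LipschitzOnWith.of_dist_le_mul
      intro s hs s' hs'
      rw [hfiso s hs s' hs', NNReal.coe_one, one_mul, Real.dist_eq]
    exact this.continuousOn
  have hAclosed : IsClosed A := by
    apply ContinuousOn.preimage_isClosed_of_isClosed
      (((Metric.continuous_infDist_pt T).comp_continuousOn hfc)) isClosed_Icc isClosed_Iic
  have h0A : (0:ℝ) ∈ A := by
    constructor
    · exact ⟨le_refl _, hD0⟩
    · show Metric.infDist (f 0) T ≤ ε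
      rw [hf0]; exact hy
  have hDA : D ∈ A := by
    constructor
    · exact ⟨hD0, le_refl _⟩
    · show Metric.infDist (f D) T ≤ ε
      rw [hfd]; exact hz
  -- midpoint closure of A
  have hmid : ∀ s ∈ A, ∀ s' ∈ A, (s + s') / 2 ∈ A := by
    intro s hs s' hs'
    have hsI : s ∈ Set.Icc (0:ℝ) D := hs.1
    have hs'I : s' ∈ Set.Icc (0:ℝ) D := hs'.1
    have hmI : (s + s') / 2 ∈ Set.Icc (0:ℝ) D :=
      ⟨by cases hsI; cases hs'I; linarith, by cases hsI; cases hs'I; linarith⟩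
    refine ⟨hmI, ?_⟩
    have key : Metric.infDist (f ((s+s')/2)) T ≤
        (Metric.infDist (f s) T + Metric.infDist (f s') T) / 2 := by
      apply infDist_midpoint h T hT hTne
      · rw [hfiso s hsI ((s+s')/2) hmI, hfiso s hsI s' hs'I,
          show s - (s+s')/2 = (s - s')/2 by ring, abs_div, abs_two]
      · rw [hfiso s' hs'I ((s+s')/2) hmI, hfiso s hsI s' hs'I,
          show s' - (s+s')/2 = (s' - s)/2 by ring, abs_div, abs_two, abs_sub_comm s' s]
    have h1 : Metric.infDist (f s) T ≤ ε := hs.2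
    have h2 : Metric.infDist (f s') T ≤ ε := hs'.2
    show Metric.infDist (f ((s+s')/2)) T ≤ ε
    linarith
  -- now show t ∈ A by the sSup/sInf trick
  have htA : t ∈ A := by
    set B1 := A ∩ Set.Iic t with hB1
    set B2 := A ∩ Set.Ici t with hB2
    have hB1ne : B1.Nonempty := ⟨0, h0A, ht.1⟩
    have hB2ne : B2.Nonempty := ⟨D, hDA, ht.2⟩
    have hB1bdd : BddAbove B1 := ⟨t, fun x hx => hx.2⟩
    have hB2bdd : BddBelow B2 := ⟨t, fun x hx => hx.2⟩
    have hB1closed : IsClosed B1 := hAclosed.inter isClosed_Iic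
    have hB2closed : IsClosed B2 := hAclosed.inter isClosed_Ici
    set u := sSup B1 with hu
    set v := sInf B2 with hv
    have huB1 : u ∈ B1 := hB1closed.csSup_mem hB1ne hB1bdd
    have hvB2 : v ∈ B2 := hB2closed.csInf_mem hB2ne hB2bdd
    have hut : u ≤ t := huB1.2
    have htv : t ≤ v := hvB2.2
    have huv : u = v := by
      by_contra hne
      have hlt : u < v := lt_of_le_of_ne (le_trans hut htv) hne
      have hmA : (u + v) / 2 ∈ A := hmid u huB1.1 v hvB2.1
      rcases le_total ((u + v) / 2) t with hc | hc
      · have : (u + v) / 2 ≤ u := le_csSup hB1bdd ⟨hmA, hc⟩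
        linarith
      · have : v ≤ (u + v) / 2 := csInf_le hB2bdd ⟨hmA, hc⟩
        linarith
    have : u = t := le_antisymm hut (huv ▸ htv)
    exact this ▸ huB1.1
  exact htA.2

lemma hull_closed {X : Type*} [MetricSpace X] (Y : Set X) :
    IsClosed (geodClosedConvexHull Y) :=
  isClosed_sInter fun _ hC => hC.1

lemma subset_hull {X : Type*} [MetricSpace X] (Y : Set X) :
    Y ⊆ geodClosedConvexHull Y :=
  fun _ hy => fun _ hC => hC.2.2 hy

lemma hull_convex {X : Type*} [MetricSpace X] (Y : Set X) :
    GeodConvex (geodClosedConvexHull Y) := by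
  intro x hx y hy f hf t ht
  unfold geodClosedConvexHull at *
  rw [mem_sInter]
  intro C hC
  exact hC.2.1 x (mem_sInter.mp hx C hC) y (mem_sInter.mp hy C hC) f hf t ht

/-- If the closed convex hull of every finite set of points of a CAT(0) space is compact,
then the closed convex hull of every compact subset is compact. -/
theorem cat0_CH_of_finite {X : Type*} [MetricSpace X] (h : IsCAT0 X)
    (hfin : ∀ S : Finset X, IsCompact (geodClosedConvexHull (S : Set X)))
    (K : Set X) (hK : IsCompact K) :
    IsCompact (geodClosedConvexHull K) := by
  haveI : CompleteSpace X := h.1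
  rcases K.eq_empty_or_nonempty with rfl | hKne
  · simpa using hfin ∅
  · apply TotallyBounded.isCompact_of_isClosed _ (hull_closed K)
    rw [Metric.totallyBounded_iff]
    intro δ hδ
    obtain ⟨t, htfin, htcov⟩ :=
      (Metric.totallyBounded_iff.mp hK.totallyBounded) (δ/3) (by linarith)
    set F := htfin.toFinset with hF
    have hFcoe : (F : Set X) = t := htfin.coe_toFinset
    set T := geodClosedConvexHull (F : Set X) with hT
    have hTcompact : IsCompact T := hfin F
    have hTconv : GeodConvex T := hull_convex _
    obtain ⟨k0, hk0⟩ := hKne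
    obtain ⟨c0, hc0t, -⟩ : ∃ c ∈ t, k0 ∈ Metric.ball c (δ/3) := by
      simpa using htcov hk0
    have hTne : T.Nonempty := ⟨c0, subset_hull _ (by rw [hFcoe]; exact hc0t)⟩
    obtain ⟨G, hGfin, hGcov⟩ :=
      (Metric.totallyBounded_iff.mp hTcompact.totallyBounded) (δ/3) (by linarith)
    refine ⟨G, hGfin, ?_⟩
    have hN : geodClosedConvexHull K ⊆ {x | Metric.infDist x T ≤ δ/3} := by
      apply sInter_subset_of_mem
      refine ⟨?_, sublevel_geodConvex h T hTconv hTne _, ?_⟩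
      · exact isClosed_le (Metric.continuous_infDist_pt T) continuous_const
      · intro k hk
        obtain ⟨c, hct, hkc⟩ : ∃ c ∈ t, k ∈ Metric.ball c (δ/3) := by
          simpa using htcov hk
        have hcT : c ∈ T := subset_hull _ (by rw [hFcoe]; exact hct)
        exact le_trans (Metric.infDist_le_dist_of_mem hcT)
          (le_of_lt (Metric.mem_ball.mp hkc))
    intro x hx
    have hxd : Metric.infDist x T ≤ δ/3 := hN hx
    obtain ⟨p, hpT, hxp⟩ := (Metric.infDist_lt_iff hTne).mp
      (lt_of_le_of_lt hxd (by linarith : δ/3 < δ/2))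
    obtain ⟨g, hgG, hpg⟩ : ∃ g ∈ G, p ∈ Metric.ball g (δ/3) := by
      simpa using hGcov hpT
    refine mem_iUnion₂.mpr ⟨g, hgG, ?_⟩
    rw [Metric.mem_ball]
    have hpgd := Metric.mem_ball.mp hpg
    calc dist x g ≤ dist x p + dist p g := dist_triangle _ _ _
    _ < δ := by linarith
end

section
/- Hyperbolic law of cosines comparison: for real numbers a,b ≥ 0 and angle γ ∈ [0,π/2], one has cosh(a)cosh(b) − sinh(a)sinh(b)cos(γ) ≥ cosh(√(a² + b² − 2ab·cos γ)). -/
private lemma hasSum_cosh_sqrt {x : ℝ} (hx : 0 ≤ x) :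
    HasSum (fun n => x ^ n / (Nat.factorial (2 * n) : ℝ)) (Real.cosh (Real.sqrt x)) := by
  have h := Real.hasSum_cosh (Real.sqrt x)
  convert h using 2 with n
  rw [pow_mul, Real.sq_sqrt hx]

/-- convexity of `x ↦ cosh (sqrt x)` at two points -/
private lemma cosh_sqrt_convex {p q l m : ℝ} (hp : 0 ≤ p) (hq : 0 ≤ q)
    (hl : 0 ≤ l) (hm : 0 ≤ m) (hlm : l + m = 1) :
    Real.cosh (Real.sqrt (l * p + m * q)) ≤
      l * Real.cosh (Real.sqrt p) + m * Real.cosh (Real.sqrt q) := by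
  have hlp : 0 ≤ l * p + m * q := by positivity
  have h1 := hasSum_cosh_sqrt hlp
  have h2 := (hasSum_cosh_sqrt hp).mul_left l
  have h3 := (hasSum_cosh_sqrt hq).mul_left m
  refine hasSum_le (fun n => ?_) h1 (h2.add h3)
  have hpow := (convexOn_pow n).2 (Set.mem_Ici.mpr hp) (Set.mem_Ici.mpr hq) hl hm hlm
  simp only [smul_eq_mul] at hpow
  have hfac : (0:ℝ) < (Nat.factorial (2 * n) : ℝ) := by positivity
  rw [div_le_iff₀ hfac]
  field_simp
  nlinarith [hfac]

/-- Hyperbolic law of cosines comparison: for sides `a, b ≥ 0` and angle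
`γ ∈ [0, π/2]`, the hyperbolic third side dominates the Euclidean one. -/
theorem hyperbolic_law_of_cosines_comparison (a b γ : ℝ) (ha : 0 ≤ a) (hb : 0 ≤ b)
    (hγ : γ ∈ Set.Icc 0 (Real.pi / 2)) :
    Real.cosh (Real.sqrt (a ^ 2 + b ^ 2 - 2 * a * b * Real.cos γ)) ≤
      Real.cosh a * Real.cosh b - Real.sinh a * Real.sinh b * Real.cos γ := by
  obtain ⟨hγ0, hγ1⟩ := hγ
  set c := Real.cos γ with hc
  have hc1 : c ≤ 1 := Real.cos_le_one γ
  have hc0 : 0 ≤ c := Real.cos_nonneg_of_mem_Icc ⟨by linarith [Real.pi_pos], hγ1⟩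
  have hl : 0 ≤ (1 - c) / 2 := by linarith
  have hm : 0 ≤ (1 + c) / 2 := by linarith
  have hlm : (1 - c) / 2 + (1 + c) / 2 = 1 := by ring
  have key := cosh_sqrt_convex (sq_nonneg (a + b)) (sq_nonneg (a - b)) hl hm hlm
  rw [Real.sqrt_sq_eq_abs, Real.sqrt_sq_eq_abs, Real.cosh_abs, Real.cosh_abs] at key
  have harg : (1 - c) / 2 * (a + b) ^ 2 + (1 + c) / 2 * (a - b) ^ 2
      = a ^ 2 + b ^ 2 - 2 * a * b * c := by ring
  rw [harg] at key
  calc Real.cosh (Real.sqrt (a ^ 2 + b ^ 2 - 2 * a * b * c))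
      ≤ (1 - c) / 2 * Real.cosh (a + b) + (1 + c) / 2 * Real.cosh (a - b) := key
    _ = Real.cosh a * Real.cosh b - Real.sinh a * Real.sinh b * c := by
        rw [Real.cosh_add, Real.cosh_sub]; ring
end

section
/- Let X be a geodesic metric space. Then X is CAT(0) if and only if for every triple of points A,B,C ∈ X with a = d(B,C), b = d(A,C), c = d(A,B) and Alexandrov angle γ at the vertex C, one has c² ≥ a² + b² − 2ab·cos(γ). -/
open Set

/-- The Euclidean comparison angle opposite to the side  in a triangle with side
lengths . -/
noncomputable def comparisonAngle (a b c : ℝ) : ℝ :=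
  Real.arccos ((a ^ 2 + b ^ 2 - c ^ 2) / (2 * a * b))

/-- The Alexandrov angle between two geodesic segments issuing from a common point,
defined as the limsup of comparison angles as the points approach the vertex. -/
noncomputable def alexandrovAngle {X : Type*} [MetricSpace X] (γ₁ γ₂ : ℝ → X) : ℝ :=
  Filter.limsup (fun p : ℝ × ℝ => comparisonAngle p.1 p.2 (dist (γ₁ p.1) (γ₂ p.2)))
    (nhdsWithin (0, 0) (Set.Ioi (0:ℝ) ×ˢ Set.Ioi (0:ℝ)))


open Set Filter Real

/-- arccos is antitone on all of ℝ. -/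
lemma arccos_le_arccos' {x y : ℝ} (h : x ≤ y) : Real.arccos y ≤ Real.arccos x := by
  unfold Real.arccos
  have := Real.monotone_arcsin h
  linarith

section Metric
variable {X : Type*} [MetricSpace X]

/-- The fundamental convexity estimate along a geodesic, derived from the midpoint
CAT(0) inequality. Stated multiplied through by `d = dist y z` to avoid division. -/
lemma geodesic_convexity
    (hcat : ∀ x y z m : X, dist y m = dist y z / 2 → dist z m = dist y z / 2 →
      dist x m ^ 2 ≤ (dist x y ^ 2 + dist x z ^ 2) / 2 - dist y z ^ 2 / 4)
    (x y z : X) (f : ℝ → X) (hf : IsGeodesicSegment f y z)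
    {s : ℝ} (hs : s ∈ Set.Icc 0 (dist y z)) :
    dist y z * dist x (f s) ^ 2 ≤
      (dist y z - s) * dist x y ^ 2 + s * dist x z ^ 2 - dist y z * s * (dist y z - s) := by
  obtain ⟨h0, h1, hdist⟩ := hf
  set d := dist y z with hd
  have hd0 : (0:ℝ) ≤ d := dist_nonneg
  -- midpoint convexity
  have mid : ∀ p ∈ Icc (0:ℝ) d, ∀ q ∈ Icc (0:ℝ) d,
      dist x (f ((p+q)/2)) ^ 2 ≤ (dist x (f p) ^ 2 + dist x (f q) ^ 2) / 2 - (p-q)^2/4 := by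
    intro p hp q hq
    have hm : (p+q)/2 ∈ Icc (0:ℝ) d := ⟨by linarith [hp.1, hq.1], by linarith [hp.2, hq.2]⟩
    have hpq : dist (f p) (f q) = |p - q| := hdist p hp q hq
    have e1 : dist (f p) (f ((p+q)/2)) = dist (f p) (f q) / 2 := by
      rw [hdist p hp _ hm, hpq, show p - (p+q)/2 = (p-q)/2 by ring, abs_div]
      simp
    have e2 : dist (f q) (f ((p+q)/2)) = dist (f p) (f q) / 2 := by
      rw [hdist q hq _ hm, hpq, show q - (p+q)/2 = -((p-q)/2) by ring, abs_neg, abs_div,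
        abs_sub_comm p q]
      simp
    have := hcat x (f p) (f q) (f ((p+q)/2)) e1 e2
    rw [hpq] at this
    have habs : |p - q| ^ 2 = (p - q) ^ 2 := sq_abs _
    linarith [this, habs.le, habs.ge]
  -- dyadic points
  have dyadic : ∀ n : ℕ, ∀ k : ℕ, k ≤ 2^n →
      d * dist x (f ((k : ℝ) * d / 2^n)) ^ 2 ≤
        (d - (k : ℝ) * d / 2^n) * dist x y ^ 2 + ((k : ℝ) * d / 2^n) * dist x z ^ 2
          - d * ((k : ℝ) * d / 2^n) * (d - (k : ℝ) * d / 2^n) := by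
    intro n
    induction n with
    | zero =>
      intro k hk
      interval_cases k
      · simp only [Nat.cast_zero, pow_zero, zero_mul, zero_div, sub_zero, mul_zero, h0]
        ring_nf
        nlinarith [dist_nonneg (x := x) (y := y)]
      · simp only [Nat.cast_one, pow_zero, one_mul, div_one, hd, h1]
        ring_nf
        rw [show f (dist y z) = z from h1]
    | succ n ih =>
      intro k hk
      have h2n : (2:ℝ)^(n+1) = 2 * 2^n := by ring
      rcases Nat.even_or_odd k with ⟨j, hj⟩ | ⟨j, hj⟩
      · subst hj
        have hj2 : j ≤ 2^n := by
          have : 2^(n+1) = 2^n + 2^n := by ring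
          omega
        have : ((j + j : ℕ) : ℝ) * d / 2^(n+1) = (j:ℝ) * d / 2^n := by
          push_cast
          field_simp
          ring
        rw [this]
        exact ih j hj2
      · subst hj
        have hj2 : j + 1 ≤ 2^n := by
          have : 2^(n+1) = 2^n + 2^n := by ring
          omega
        have hj1 : j ≤ 2^n := by omega
        set p := (j:ℝ) * d / 2^n with hp
        set q := ((j:ℝ)+1) * d / 2^n with hq
        have h2npos : (0:ℝ) < 2^n := by positivity
        have hple : ∀ i : ℕ, i ≤ 2^n → (0:ℝ) ≤ (i:ℝ) * d / 2^n ∧ (i:ℝ) * d / 2^n ≤ d := by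
          intro i hi
          constructor
          · positivity
          · rw [div_le_iff₀ h2npos]
            have : (i:ℝ) ≤ 2^n := by exact_mod_cast Nat.cast_le.mpr hi |>.trans_eq (by push_cast; ring)
            nlinarith
        have hpI : p ∈ Icc (0:ℝ) d := ⟨(hple j hj1).1, (hple j hj1).2⟩
        have hqI : q ∈ Icc (0:ℝ) d := by
          have := hple (j+1) hj2
          constructor
          · rw [hq]; positivity
          · have h2 := this.2
            rw [hq]
            convert h2 using 2
            exacts [rfl, by simp]
        have hmid : ((2*j+1 : ℕ) : ℝ) * d / 2^(n+1) = (p + q)/2 := by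
          rw [hp, hq]
          push_cast
          field_simp
          ring
        have H := mid p hpI q hqI
        have H' := mul_le_mul_of_nonneg_left H hd0
        have ih1 := ih j hj1
        have ih2 := ih (j+1) hj2
        rw [show (((j:ℕ)+1 : ℕ) : ℝ) = (j:ℝ)+1 by push_cast; ring] at ih2
        rw [hmid]
        rw [← hp] at ih1
        rw [← hq] at ih2
        nlinarith [H', ih1, ih2]
  -- limit
  rcases eq_or_lt_of_le hd0 with hdz | hdpos
  · have hs0 : s = 0 := le_antisymm (hs.2.trans_eq hdz.symm) hs.1
    subst hs0
    rw [← hdz]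
    simp [h0]
  · -- continuity of f on the interval
    have hlip : LipschitzOnWith 1 f (Icc 0 d) := by
      rw [lipschitzOnWith_iff_dist_le_mul]
      intro a ha b hb
      rw [hdist a ha b hb, Real.dist_eq]
      simp
    have hfc : ContinuousOn f (Icc 0 d) := hlip.continuousOn
    have hGc : ContinuousOn (fun t => d * dist x (f t) ^ 2) (Icc 0 d) := by
      apply ContinuousOn.mul continuousOn_const
      have : ContinuousOn (fun t => dist x (f t)) (Icc 0 d) :=
        (continuous_const.dist continuous_id).comp_continuousOn hfc
      exact this.pow 2
    set seq : ℕ → ℝ := fun n => (⌊s * 2^n / d⌋₊ : ℝ) * d / 2^n with hseq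
    have hk : ∀ n : ℕ, ⌊s * 2^n / d⌋₊ ≤ 2^n := by
      intro n
      have : s * 2^n / d ≤ ((2^n : ℕ) : ℝ) := by
        rw [div_le_iff₀ hdpos]
        push_cast
        nlinarith [hs.2, (show (0:ℝ) < 2^n by positivity)]
      calc ⌊s * 2^n / d⌋₊ ≤ ⌊((2^n : ℕ) : ℝ)⌋₊ := Nat.floor_le_floor this
        _ = 2^n := Nat.floor_natCast _
    have hseqmem : ∀ n, seq n ∈ Icc (0:ℝ) d := by
      intro n
      have h2npos : (0:ℝ) < 2^n := by positivity
      constructor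
      · have : (0:ℝ) ≤ (⌊s * 2^n / d⌋₊ : ℝ) * d / 2^n :=
          div_nonneg (mul_nonneg (Nat.cast_nonneg _) hd0) h2npos.le
        simpa [hseq] using this
      · rw [hseq]
        simp only
        rw [div_le_iff₀ h2npos]
        have : ((⌊s * 2^n / d⌋₊ : ℕ) : ℝ) ≤ ((2^n : ℕ):ℝ) := Nat.cast_le.mpr (hk n)
        push_cast at this ⊢
        nlinarith
    have hlb : ∀ n, s - d / 2^n ≤ seq n := by
      intro n
      have h2npos : (0:ℝ) < 2^n := by positivity
      have := Nat.lt_floor_add_one (s * 2^n / d)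
      rw [hseq]
      simp only
      rw [le_div_iff₀ h2npos]
      have h2 : s * 2^n / d < (⌊s * 2^n / d⌋₊ : ℝ) + 1 := this
      rw [div_lt_iff₀ hdpos] at h2
      have h3 : (s - d / 2^n) * 2^n = s * 2^n - d := by field_simp
      linarith
    have hub : ∀ n, seq n ≤ s := by
      intro n
      have h2npos : (0:ℝ) < 2^n := by positivity
      have hfl : ((⌊s * 2^n / d⌋₊ : ℕ):ℝ) ≤ s * 2^n / d := Nat.floor_le (div_nonneg (mul_nonneg hs.1 (by positivity)) hd0)
      rw [hseq]
      simp only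
      rw [div_le_iff₀ h2npos]
      rw [le_div_iff₀ hdpos] at hfl
      nlinarith
    have htend : Tendsto seq atTop (nhds s) := by
      have h1 : Tendsto (fun n : ℕ => s - d / 2^n) atTop (nhds s) := by
        have : Tendsto (fun n : ℕ => d * (1/2:ℝ)^n) atTop (nhds 0) := by
          have := tendsto_pow_atTop_nhds_zero_of_lt_one (r := (1/2:ℝ)) (by norm_num) (by norm_num)
          simpa using this.const_mul d
        have h2 : Tendsto (fun n : ℕ => s - d * (1/2:ℝ)^n) atTop (nhds (s - 0)) :=
          tendsto_const_nhds.sub this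
        simp only [sub_zero] at h2
        convert h2 using 2 with n
        rw [div_pow, one_pow]
        ring
      exact tendsto_of_tendsto_of_tendsto_of_le_of_le h1 tendsto_const_nhds hlb hub
    have htendW : Tendsto seq atTop (nhdsWithin s (Icc 0 d)) := by
      rw [tendsto_nhdsWithin_iff]
      exact ⟨htend, Eventually.of_forall hseqmem⟩
    have hG : Tendsto (fun n => d * dist x (f (seq n)) ^ 2) atTop
        (nhds (d * dist x (f s) ^ 2)) := (hGc s hs).tendsto.comp htendW
    have hR : Tendsto (fun n => (d - seq n) * dist x y ^ 2 + seq n * dist x z ^ 2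
        - d * seq n * (d - seq n)) atTop
        (nhds ((d - s) * dist x y ^ 2 + s * dist x z ^ 2 - d * s * (d - s))) := by
      have : Continuous (fun t : ℝ => (d - t) * dist x y ^ 2 + t * dist x z ^ 2
          - d * t * (d - t)) := by
        refine Continuous.sub (Continuous.add ?_ ?_) ?_
        · exact (continuous_const.sub continuous_id).mul continuous_const
        · exact continuous_id.mul continuous_const
        · exact (continuous_const.mul continuous_id).mul (continuous_const.sub continuous_id)
      exact (this.tendsto s).comp htend
    refine le_of_tendsto_of_tendsto' hG hR ?_
    intro n
    exact dyadic n _ (hk n)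

end Metric


open Set Filter Real

lemma angleFilter_neBot :
    (nhdsWithin ((0:ℝ), (0:ℝ)) (Set.Ioi (0:ℝ) ×ˢ Set.Ioi (0:ℝ))).NeBot := by
  rw [← mem_closure_iff_nhdsWithin_neBot, closure_prod_eq, closure_Ioi]
  exact ⟨Set.self_mem_Ici, Set.self_mem_Ici⟩

lemma alexandrovAngle_nonneg {X : Type*} [MetricSpace X] (γ₁ γ₂ : ℝ → X) :
    0 ≤ alexandrovAngle γ₁ γ₂ := by
  haveI := angleFilter_neBot
  apply Filter.le_limsup_of_frequently_le
  · exact Eventually.frequently (Eventually.of_forall fun p => Real.arccos_nonneg _)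
  · exact Filter.isBoundedUnder_of ⟨π, fun p => Real.arccos_le_pi _⟩

lemma alexandrovAngle_le_pi {X : Type*} [MetricSpace X] (γ₁ γ₂ : ℝ → X) :
    alexandrovAngle γ₁ γ₂ ≤ π := by
  haveI := angleFilter_neBot
  exact Filter.limsup_le_of_le
    (Filter.isCoboundedUnder_le_of_eventually_le _
      (Eventually.of_forall fun p => Real.arccos_nonneg _))
    (Eventually.of_forall fun p => Real.arccos_le_pi _)

lemma comparisonAngle_lt_imp {t s D φ : ℝ} (ht : 0 < t) (hs : 0 < s) (hφ0 : 0 < φ)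
    (hφπ : φ ≤ π) (h : comparisonAngle t s D < φ) :
    D ^ 2 < t ^ 2 + s ^ 2 - 2 * t * s * Real.cos φ := by
  set v := (t^2 + s^2 - D^2) / (2*t*s) with hv
  have hca : comparisonAngle t s D = Real.arccos v := rfl
  have hts : (0:ℝ) < 2*t*s := by positivity
  have hDv : D^2 = t^2 + s^2 - 2*t*s*v := by rw [hv]; field_simp; ring
  have hcos : Real.cos φ < v := by
    rcases le_or_gt v (-1) with hv1 | hv1
    · exfalso
      rw [hca, Real.arccos_of_le_neg_one hv1] at h
      linarith
    rcases lt_or_ge v 1 with hv2 | hv2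
    · have hc : Real.cos (comparisonAngle t s D) = v := by
        rw [hca]; exact Real.cos_arccos hv1.le hv2.le
      have := Real.cos_lt_cos_of_nonneg_of_le_pi (Real.arccos_nonneg v) hφπ (hca ▸ h)
      rw [← hca, hc] at this
      exact this
    · have h1 : Real.cos φ < Real.cos 0 :=
        Real.cos_lt_cos_of_nonneg_of_le_pi (le_refl 0) hφπ hφ0
      rw [Real.cos_zero] at h1
      linarith
  nlinarith [mul_lt_mul_of_pos_left hcos hts]

lemma euclid_aux {φ₁ φ₂ : ℝ} (h₁ : 0 < φ₁) (h₂ : 0 < φ₂) (hsum : φ₁ + φ₂ < π) :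
    ∃ s t u ℓ₁ ℓ₂ : ℝ, 0 < s ∧ 0 < t ∧ 0 < u ∧ 0 < ℓ₁ ∧ 0 < ℓ₂ ∧
      t^2 + s^2 - 2*t*s*Real.cos φ₁ ≤ ℓ₁^2 ∧
      t^2 + u^2 - 2*t*u*Real.cos φ₂ ≤ ℓ₂^2 ∧ ℓ₁ + ℓ₂ < s + u := by
  have hπ1 : φ₁ < π := by linarith
  have hπ2 : φ₂ < π := by linarith
  have hs1 : 0 < Real.sin φ₁ := Real.sin_pos_of_pos_of_lt_pi h₁ hπ1
  have hs2 : 0 < Real.sin φ₂ := Real.sin_pos_of_pos_of_lt_pi h₂ hπ2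
  have hS0 : 0 < φ₁ + φ₂ := by linarith
  have hsS : 0 < Real.sin (φ₁ + φ₂) := Real.sin_pos_of_pos_of_lt_pi hS0 hsum
  have hcS : Real.cos (φ₁ + φ₂) < 1 := by
    have := Real.cos_lt_cos_of_nonneg_of_le_pi (le_refl 0) hsum.le hS0
    rwa [Real.cos_zero] at this
  have hcS' : -1 < Real.cos (φ₁ + φ₂) := by
    have := Real.cos_lt_cos_of_nonneg_of_le_pi hS0.le (le_refl π) hsum
    rwa [Real.cos_pi] at this
  set s := Real.sin φ₂ with hsdef
  set u := Real.sin φ₁ with hudef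
  set t := Real.sin (φ₁ + φ₂) / 2 with htdef
  set A := s^2 + u^2 - 2*s*u*Real.cos (φ₁ + φ₂) with hA
  have hApos : 0 < A := by
    nlinarith [mul_pos (mul_pos hs2 hs1) (sub_pos.2 hcS), sq_nonneg (s - u)]
  set L := Real.sqrt A with hL
  have hLpos : 0 < L := Real.sqrt_pos.2 hApos
  have hLsq : L^2 = A := Real.sq_sqrt hApos.le
  refine ⟨s, t, u, L/2, L/2, hs2, by positivity, hs1, by positivity, by positivity, ?_, ?_, ?_⟩
  · -- first comparison: equality in fact
    have key : t^2 + s^2 - 2*t*s*Real.cos φ₁ = A/4 := by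
      simp only [htdef, hsdef, hudef, hA]
      rw [Real.sin_add, Real.cos_add]
      linear_combination (Real.sin φ₁^2/4) * (Real.sin_sq_add_cos_sq φ₂) -
        (3*Real.sin φ₂^2/4) * (Real.sin_sq_add_cos_sq φ₁)
    rw [key, div_pow, hLsq]
    norm_num
  · have key : t^2 + u^2 - 2*t*u*Real.cos φ₂ = A/4 := by
      simp only [htdef, hsdef, hudef, hA]
      rw [Real.sin_add, Real.cos_add]
      linear_combination (Real.sin φ₂^2/4) * (Real.sin_sq_add_cos_sq φ₁) -
        (3*Real.sin φ₁^2/4) * (Real.sin_sq_add_cos_sq φ₂)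
    rw [key, div_pow, hLsq]
    norm_num
  · have : L < s + u := by
      rw [hL]
      rw [Real.sqrt_lt' (by positivity)]
      nlinarith [mul_pos (mul_pos hs2 hs1)
        (show (0:ℝ) < 1 + Real.cos (φ₁ + φ₂) by linarith)]
    linarith

set_option maxHeartbeats 2000000 in

/-- A complete geodesic metric space is CAT(0) if and only if for every triangle the law
of cosines inequality holds with the Alexandrov angle at the vertex. -/
theorem cat0_iff_law_of_cosines {X : Type*} [MetricSpace X] [CompleteSpace X]
    (hg : GeodesicSpace X) :
    IsCAT0 X ↔
      ∀ A B C : X, ∀ γ₁ γ₂ : ℝ → X,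
        IsGeodesicSegment γ₁ C A → IsGeodesicSegment γ₂ C B →
        dist A B ^ 2 ≥ dist B C ^ 2 + dist A C ^ 2 -
          2 * dist B C * dist A C * Real.cos (alexandrovAngle γ₁ γ₂) := by
  constructor
  · -- forward direction
    rintro ⟨-, -, hcat⟩ A B C γ₁ γ₂ hγ₁ hγ₂
    by_cases hb0 : dist A C = 0
    · have hAC : A = C := dist_eq_zero.1 hb0
      subst hAC
      simp [dist_comm A B]
    by_cases ha0 : dist B C = 0
    · have hBC : B = C := dist_eq_zero.1 ha0
      subst hBC
      simp [dist_comm A B]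
    rw [dist_comm B C, dist_comm A C]
    have hbpos : 0 < dist C A := by
      rw [dist_comm]; exact dist_nonneg.lt_of_ne (Ne.symm hb0)
    have hapos : 0 < dist C B := by
      rw [dist_comm]; exact dist_nonneg.lt_of_ne (Ne.symm ha0)
    set K := (dist C B ^ 2 + dist C A ^ 2 - dist A B ^ 2) / (2 * dist C B * dist C A) with hK
    have hK1 : -1 ≤ K := by
      rw [hK, le_div_iff₀ (by positivity)]
      have h1 : dist A B ≤ dist A C + dist C B := dist_triangle A C B
      rw [dist_comm A C] at h1
      nlinarith [dist_nonneg (x := A) (y := B)]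
    have hK2 : K ≤ 1 := by
      rw [hK, div_le_one (by positivity)]
      have h1 : dist C B ≤ dist C A + dist A B := dist_triangle C A B
      have h2 : dist C A ≤ dist C B + dist B A := dist_triangle C B A
      rw [dist_comm B A] at h2
      nlinarith [dist_nonneg (x := A) (y := B)]
    -- pointwise comparison bound
    have hpoint : ∀ s t : ℝ, 0 < s → 0 < t → s ≤ dist C A → t ≤ dist C B →
        comparisonAngle s t (dist (γ₁ s) (γ₂ t)) ≤ Real.arccos K := by
      intro s t hs ht hsb hta
      have h1 := geodesic_convexity hcat (γ₂ t) C A γ₁ hγ₁ (s := s) ⟨hs.le, hsb⟩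
      have h2 := geodesic_convexity hcat A C B γ₂ hγ₂ (s := t) ⟨ht.le, hta⟩
      have hdt : dist (γ₂ t) C = t := by
        have := hγ₂.2.2 t ⟨ht.le, hta⟩ 0 ⟨le_refl 0, dist_nonneg⟩
        rw [hγ₂.1] at this
        rw [this, sub_zero, abs_of_pos ht]
      rw [hdt] at h1
      rw [dist_comm (γ₂ t) (γ₁ s), dist_comm (γ₂ t) A] at h1
      rw [dist_comm A C] at h2
      have hA1 := mul_le_mul_of_nonneg_left h1 hapos.le
      have hA2 := mul_le_mul_of_nonneg_left h2 hs.le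
      have hvK : K ≤ (s^2 + t^2 - dist (γ₁ s) (γ₂ t)^2) / (2*s*t) := by
        rw [hK, div_le_div_iff₀ (by positivity) (by positivity)]
        linarith [hA1, hA2]
      exact arccos_le_arccos' hvK
    -- eventual bound on comparison angles
    haveI := angleFilter_neBot
    have hEvN : ∀ᶠ p : ℝ × ℝ in nhds ((0:ℝ), (0:ℝ)), p.1 < dist C A ∧ p.2 < dist C B := by
      have hop : IsOpen {p : ℝ × ℝ | p.1 < dist C A ∧ p.2 < dist C B} :=
        (isOpen_lt continuous_fst continuous_const).inter
          (isOpen_lt continuous_snd continuous_const)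
      exact hop.mem_nhds ⟨hbpos, hapos⟩
    have hEv : ∀ᶠ p : ℝ × ℝ in nhdsWithin ((0:ℝ), (0:ℝ)) (Set.Ioi (0:ℝ) ×ˢ Set.Ioi (0:ℝ)),
        comparisonAngle p.1 p.2 (dist (γ₁ p.1) (γ₂ p.2)) ≤ Real.arccos K := by
      filter_upwards [eventually_mem_nhdsWithin, hEvN.filter_mono nhdsWithin_le_nhds]
        with p hp hlt
      exact hpoint p.1 p.2 hp.1 hp.2 hlt.1.le hlt.2.le
    have hle : alexandrovAngle γ₁ γ₂ ≤ Real.arccos K := by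
      apply Filter.limsup_le_of_le
        (Filter.isCoboundedUnder_le_of_eventually_le _
          (Filter.Eventually.of_forall fun p => Real.arccos_nonneg _))
      exact hEv
    have h0γ : 0 ≤ alexandrovAngle γ₁ γ₂ := alexandrovAngle_nonneg _ _
    have hcos : K ≤ Real.cos (alexandrovAngle γ₁ γ₂) := by
      have := Real.cos_le_cos_of_nonneg_of_le_pi h0γ (Real.arccos_le_pi K) hle
      rwa [Real.cos_arccos hK1 hK2] at this
    have hKeq : 2 * dist C B * dist C A * K = dist C B ^ 2 + dist C A ^ 2 - dist A B ^ 2 := by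
      rw [hK]; field_simp
    linarith [mul_le_mul_of_nonneg_left hcos
      (show (0:ℝ) ≤ 2 * dist C B * dist C A by positivity)]
  · -- backward direction
    intro hyp
    refine ⟨inferInstance, hg, ?_⟩
    intro x y z m hym hzm
    by_cases hd0 : dist y z = 0
    · have hy : y = m := dist_eq_zero.1 (by rw [hym, hd0]; norm_num)
      have hz : z = m := dist_eq_zero.1 (by rw [hzm, hd0]; norm_num)
      rw [hy, hz]
      simp
    have hd : 0 < dist y z := dist_nonneg.lt_of_ne (Ne.symm hd0)
    obtain ⟨f₁, hf₁⟩ := hg y m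
    obtain ⟨f₂, hf₂⟩ := hg m z
    obtain ⟨γx, hγx⟩ := hg m x
    have hdmy : dist m y = dist y z / 2 := by rw [dist_comm]; exact hym
    have hdmz : dist m z = dist y z / 2 := by rw [dist_comm]; exact hzm
    set γy : ℝ → X := fun s => f₁ (dist y m - s) with hγydef
    have hγy : IsGeodesicSegment γy m y := by
      refine ⟨?_, ?_, ?_⟩
      · have := hf₁.2.1
        simpa [hγydef] using this
      · have h0 : dist y m - dist m y = 0 := by rw [dist_comm y m]; ring
        simp only [hγydef, h0]
        exact hf₁.1
      · intro s hs t ht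
        rw [dist_comm m y] at hs ht
        have h1 : dist y m - s ∈ Set.Icc 0 (dist y m) :=
          ⟨by linarith [hs.2], by linarith [hs.1]⟩
        have h2 : dist y m - t ∈ Set.Icc 0 (dist y m) :=
          ⟨by linarith [ht.2], by linarith [ht.1]⟩
        simp only [hγydef]
        rw [hf₁.2.2 _ h1 _ h2, show dist y m - s - (dist y m - t) = t - s by ring,
          abs_sub_comm]
    have I₁ := hyp x y m γx γy hγx hγy
    have I₂ := hyp x z m γx f₂ hγx hf₂
    set α₁ := alexandrovAngle γx γy with hα₁
    set α₂ := alexandrovAngle γx f₂ with hα₂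
    -- points on the two halves of the geodesic through m are at distance s + u
    have hyzdist : ∀ s ∈ Set.Icc (0:ℝ) (dist y z / 2), ∀ u ∈ Set.Icc (0:ℝ) (dist y z / 2),
        dist (γy s) (f₂ u) = s + u := by
      intro s hs u hu
      have hsIcc : dist y m - s ∈ Set.Icc 0 (dist y m) :=
        ⟨by rw [hym]; linarith [hs.2], by rw [hym]; linarith [hs.1]⟩
      have hDIcc : dist y m ∈ Set.Icc 0 (dist y m) := ⟨dist_nonneg, le_refl _⟩
      have h0Icc : (0:ℝ) ∈ Set.Icc 0 (dist m z) := ⟨le_refl _, dist_nonneg⟩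
      have huIcc : u ∈ Set.Icc 0 (dist m z) := ⟨hu.1, by rw [hdmz]; exact hu.2⟩
      have hym' : dist (γy s) m = s := by
        simp only [hγydef]
        have := hf₁.2.2 _ hsIcc _ hDIcc
        rw [hf₁.2.1] at this
        rw [this, show dist y m - s - dist y m = -s by ring, abs_neg, abs_of_nonneg hs.1]
      have hmu : dist m (f₂ u) = u := by
        have := hf₂.2.2 0 h0Icc u huIcc
        rw [hf₂.1] at this
        rw [this, zero_sub, abs_neg, abs_of_nonneg hu.1]
      apply le_antisymm
      · calc dist (γy s) (f₂ u) ≤ dist (γy s) m + dist m (f₂ u) := dist_triangle _ _ _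
          _ = s + u := by rw [hym', hmu]
      · have hyγ : dist y (γy s) = dist y z / 2 - s := by
          simp only [hγydef]
          have h0' : (0:ℝ) ∈ Set.Icc 0 (dist y m) := ⟨le_refl _, dist_nonneg⟩
          have := hf₁.2.2 0 h0' _ hsIcc
          rw [hf₁.1] at this
          rw [this, zero_sub, abs_neg, abs_of_nonneg (by rw [hym]; linarith [hs.2]), hym]
        have hfz : dist (f₂ u) z = dist y z / 2 - u := by
          have hDz : dist m z ∈ Set.Icc 0 (dist m z) := ⟨dist_nonneg, le_refl _⟩
          have := hf₂.2.2 u huIcc _ hDz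
          rw [hf₂.2.1] at this
          rw [this, abs_of_nonpos (by rw [hdmz]; linarith [hu.2]), hdmz]
          ring
        have htr1 : dist y z ≤ dist y (γy s) + dist (γy s) z := dist_triangle _ _ _
        have htr2 : dist (γy s) z ≤ dist (γy s) (f₂ u) + dist (f₂ u) z := dist_triangle _ _ _
        rw [hyγ] at htr1
        rw [hfz] at htr2
        linarith
    -- key angle inequality
    have key : Real.cos α₁ + Real.cos α₂ ≤ 0 := by
      by_contra hpos
      push_neg at hpos
      have h1π : α₁ ≤ π := alexandrovAngle_le_pi _ _
      have h2π : α₂ ≤ π := alexandrovAngle_le_pi _ _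
      have h10 : 0 ≤ α₁ := alexandrovAngle_nonneg _ _
      have h20 : 0 ≤ α₂ := alexandrovAngle_nonneg _ _
      have hltπ : α₁ + α₂ < π := by
        by_contra hge
        push_neg at hge
        have h3 : π - α₁ ≤ α₂ := by linarith
        have h4 : Real.cos α₂ ≤ Real.cos (π - α₁) :=
          Real.cos_le_cos_of_nonneg_of_le_pi (by linarith [Real.pi_pos]; ) h2π h3
        rw [Real.cos_pi_sub] at h4
        linarith
      set ε := (π - α₁ - α₂) / 3 with hε
      have hεpos : 0 < ε := by rw [hε]; linarith
      obtain ⟨s₀, t₀, u₀, ℓ₁, ℓ₂, hs₀, ht₀, hu₀, hl₁, hl₂, hc₁, hc₂, hltsum⟩ :=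
        euclid_aux (φ₁ := α₁ + ε) (φ₂ := α₂ + ε) (by linarith) (by linarith) (by linarith)
      haveI := angleFilter_neBot
      have hev₁ : ∀ᶠ p : ℝ × ℝ in nhdsWithin ((0:ℝ), (0:ℝ)) (Set.Ioi (0:ℝ) ×ˢ Set.Ioi (0:ℝ)),
          comparisonAngle p.1 p.2 (dist (γx p.1) (γy p.2)) < α₁ + ε :=
        Filter.eventually_lt_of_limsup_lt
          (by show alexandrovAngle γx γy < α₁ + ε; rw [← hα₁]; linarith)
          (Filter.isBoundedUnder_of ⟨π, fun p => Real.arccos_le_pi _⟩)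
      have hev₂ : ∀ᶠ p : ℝ × ℝ in nhdsWithin ((0:ℝ), (0:ℝ)) (Set.Ioi (0:ℝ) ×ˢ Set.Ioi (0:ℝ)),
          comparisonAngle p.1 p.2 (dist (γx p.1) (f₂ p.2)) < α₂ + ε :=
        Filter.eventually_lt_of_limsup_lt
          (by show alexandrovAngle γx f₂ < α₂ + ε; rw [← hα₂]; linarith)
          (Filter.isBoundedUnder_of ⟨π, fun p => Real.arccos_le_pi _⟩)
      obtain ⟨δ₁, hδ₁, hball₁⟩ := Metric.mem_nhdsWithin_iff.1 hev₁
      obtain ⟨δ₂, hδ₂, hball₂⟩ := Metric.mem_nhdsWithin_iff.1 hev₂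
      obtain ⟨lam, hlampos, hb1, hb2, hb3, hb4, hb5, hb6⟩ :
          ∃ lam : ℝ, 0 < lam ∧ lam * t₀ < δ₁ ∧ lam * s₀ < δ₁ ∧ lam * t₀ < δ₂ ∧
            lam * u₀ < δ₂ ∧ lam * s₀ ≤ dist y z / 2 ∧ lam * u₀ ≤ dist y z / 2 := by
        set M := max (max s₀ t₀) u₀ with hM
        have hsM : s₀ ≤ M := le_trans (le_max_left _ _) (le_max_left _ _)
        have htM : t₀ ≤ M := le_trans (le_max_right _ _) (le_max_left _ _)
        have huM : u₀ ≤ M := le_max_right _ _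
        have hMpos : 0 < M := lt_of_lt_of_le hs₀ hsM
        set c := min (min δ₁ δ₂) (dist y z / 2) with hc
        have hcpos : 0 < c := lt_min (lt_min hδ₁ hδ₂) (by linarith)
        have hm1 : c ≤ δ₁ := le_trans (min_le_left _ _) (min_le_left _ _)
        have hm2 : c ≤ δ₂ := le_trans (min_le_left _ _) (min_le_right _ _)
        have hm3 : c ≤ dist y z / 2 := min_le_right _ _
        have hgen : ∀ w : ℝ, w ≤ M → c / (2*M) * w ≤ c / 2 := by
          intro w hw
          rw [div_mul_eq_mul_div, div_le_div_iff₀ (by positivity) two_pos]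
          nlinarith
        exact ⟨c / (2*M), by positivity,
          lt_of_le_of_lt (hgen t₀ htM) (by linarith),
          lt_of_le_of_lt (hgen s₀ hsM) (by linarith),
          lt_of_le_of_lt (hgen t₀ htM) (by linarith),
          lt_of_le_of_lt (hgen u₀ huM) (by linarith),
          le_trans (hgen s₀ hsM) (by linarith),
          le_trans (hgen u₀ huM) (by linarith)⟩
      have hts : 0 < lam * t₀ := mul_pos hlampos ht₀
      have hss : 0 < lam * s₀ := mul_pos hlampos hs₀
      have hus : 0 < lam * u₀ := mul_pos hlampos hu₀
      have hl1s : 0 < lam * ℓ₁ := mul_pos hlampos hl₁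
      have hl2s : 0 < lam * ℓ₂ := mul_pos hlampos hl₂
      -- apply the eventual bounds at the chosen scale
      have hmem₁ : (lam * t₀, lam * s₀) ∈ Metric.ball ((0:ℝ), (0:ℝ)) δ₁ ∩
          (Set.Ioi (0:ℝ) ×ˢ Set.Ioi (0:ℝ)) := by
        refine ⟨?_, hts, hss⟩
        rw [Metric.mem_ball, Prod.dist_eq]
        have e1 : dist (lam * t₀) 0 = lam * t₀ := by
          rw [Real.dist_eq, sub_zero, abs_of_pos hts]
        have e2 : dist (lam * s₀) 0 = lam * s₀ := by
          rw [Real.dist_eq, sub_zero, abs_of_pos hss]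
        rw [e1, e2]
        exact max_lt hb1 hb2
      have hmem₂ : (lam * t₀, lam * u₀) ∈ Metric.ball ((0:ℝ), (0:ℝ)) δ₂ ∩
          (Set.Ioi (0:ℝ) ×ˢ Set.Ioi (0:ℝ)) := by
        refine ⟨?_, hts, hus⟩
        rw [Metric.mem_ball, Prod.dist_eq]
        have e1 : dist (lam * t₀) 0 = lam * t₀ := by
          rw [Real.dist_eq, sub_zero, abs_of_pos hts]
        have e2 : dist (lam * u₀) 0 = lam * u₀ := by
          rw [Real.dist_eq, sub_zero, abs_of_pos hus]
        rw [e1, e2]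
        exact max_lt hb3 hb4
      have hP₁ := hball₁ hmem₁
      have hP₂ := hball₂ hmem₂
      simp only [Set.mem_setOf_eq] at hP₁ hP₂
      have hD₁ := comparisonAngle_lt_imp hts hss
        (by linarith : (0:ℝ) < α₁ + ε) (by linarith) hP₁
      have hD₂ := comparisonAngle_lt_imp hts hus
        (by linarith : (0:ℝ) < α₂ + ε) (by linarith) hP₂
      have hsc₁ : (lam*t₀)^2 + (lam*s₀)^2 - 2*(lam*t₀)*(lam*s₀)*Real.cos (α₁+ε) ≤
          (lam*ℓ₁)^2 := by linarith [mul_le_mul_of_nonneg_left hc₁ (sq_nonneg lam)]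
      have hsc₂ : (lam*t₀)^2 + (lam*u₀)^2 - 2*(lam*t₀)*(lam*u₀)*Real.cos (α₂+ε) ≤
          (lam*ℓ₂)^2 := by linarith [mul_le_mul_of_nonneg_left hc₂ (sq_nonneg lam)]
      have hDlt₁ : dist (γx (lam*t₀)) (γy (lam*s₀)) < lam*ℓ₁ :=
        lt_of_pow_lt_pow_left₀ 2 hl1s.le (by linarith)
      have hDlt₂ : dist (γx (lam*t₀)) (f₂ (lam*u₀)) < lam*ℓ₂ :=
        lt_of_pow_lt_pow_left₀ 2 hl2s.le (by linarith)
      have hdyz := hyzdist (lam*s₀) ⟨hss.le, hb5⟩ (lam*u₀) ⟨hus.le, hb6⟩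
      have htri : dist (γy (lam*s₀)) (f₂ (lam*u₀)) ≤
          dist (γy (lam*s₀)) (γx (lam*t₀)) + dist (γx (lam*t₀)) (f₂ (lam*u₀)) :=
        dist_triangle _ _ _
      rw [dist_comm (γy (lam*s₀)) (γx (lam*t₀))] at htri
      rw [hdyz] at htri
      have hfin : lam * (ℓ₁ + ℓ₂) < lam * (s₀ + u₀) :=
        mul_lt_mul_of_pos_left hltsum hlampos
      linarith [htri, hDlt₁, hDlt₂, hfin]
    -- conclude midpoint inequality
    rw [hym] at I₁
    rw [hzm] at I₂
    have hprod : dist y z * dist x m * (Real.cos α₁ + Real.cos α₂) ≤ 0 :=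
      mul_nonpos_of_nonneg_of_nonpos (mul_nonneg dist_nonneg dist_nonneg) key
    have hxm : dist x m = dist m x := dist_comm _ _
    have hxy : dist x y = dist y x := dist_comm _ _
    linarith [I₁, I₂, hprod]
end
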